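/- arXiv:2502.06331 — 7 statements merged into one kernel-verified Lean document; each statement's English description precedes it below -/
import Mathlib

section
/- Let Y be a nonempty set, π : Y → [0,1] a function, and pl(A) = sup_{y∈A} π(y) (with pl(∅) = 0). Then pl is ∞-alternating (i.e. a plausibility function): for every k ≥ 1 and all subsets A_1, …, A_k of Y, pl(⋂_{i=1}^k A_i) ≤ Σ_{∅≠I⊆{1,…,k}} (−1)^{|I|−1} · pl(⋃_{i∈I} A_i). -/
open Finset

/-- min distributes over fold max, for a nonneg constant. -/
private lemma fold_max_min {ι : Type*} [DecidableEq ι] (g : ι → ℝ) (c : ℝ) (hc : 0 ≤ c)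
    (I : Finset ι) :
    I.fold max 0 (fun i => min c (g i)) = min c (I.fold max 0 g) := by
  induction I using Finset.induction with
  | empty => simp [hc]
  | insert _ _ ha ih =>
    rw [Finset.fold_insert ha, Finset.fold_insert ha, ih, min_max_distrib_left]

private lemma inf'_min {ι : Type*} (S : Finset ι) (hS : S.Nonempty) (g : ι → ℝ) (c : ℝ) :
    S.inf' hS (fun i => min c (g i)) = min c (S.inf' hS g) := by
  apply le_antisymm
  · obtain ⟨i₀, hi₀⟩ := hS
    refine le_min ?_ ?_
    · exact le_trans (Finset.inf'_le _ hi₀) (min_le_left _ _)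
    · exact Finset.le_inf' _ _ fun i hi => le_trans (Finset.inf'_le _ hi) (min_le_right _ _)
  · refine Finset.le_inf' _ _ fun i hi => le_min (min_le_left _ _) ?_
    exact le_trans (min_le_right _ _) (Finset.inf'_le _ hi)

private lemma sum_neg_one_pow_real {ι : Type*} [DecidableEq ι] (S : Finset ι)
    (hS : S.Nonempty) : ∑ I ∈ S.powerset, (-1 : ℝ) ^ I.card = 0 := by
  have h := Finset.sum_powerset_neg_one_pow_card_of_nonempty hS
  have : ((∑ m ∈ S.powerset, (-1 : ℤ) ^ m.card : ℤ) : ℝ)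
      = ∑ I ∈ S.powerset, (-1 : ℝ) ^ I.card := by push_cast; rfl
  rw [← this, h]; norm_num

private lemma sign_flip {ι : Type*} (I : Finset ι) (x : ℝ) (hx : I = ∅ → x = 0) :
    (-1 : ℝ) ^ I.card * x = -((-1 : ℝ) ^ (I.card - 1) * x) := by
  rcases eq_or_ne I ∅ with h | h
  · simp [hx h]
  · have hc : I.card - 1 + 1 = I.card :=
      Nat.succ_pred_eq_of_pos (Finset.card_pos.mpr (Finset.nonempty_iff_ne_empty.mpr h))
    conv_lhs => rw [← hc]
    rw [pow_succ]; ring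

/-- Inclusion–exclusion identity for max: the alternating sum of maxima over
subsets equals the minimum (the empty set contributes `0`). -/
private lemma key_identity {ι : Type*} [DecidableEq ι] :
    ∀ (S : Finset ι) (hS : S.Nonempty), ∀ g : ι → ℝ, (∀ i, 0 ≤ g i) →
      ∑ I ∈ S.powerset, (-1 : ℝ) ^ (I.card - 1) * I.fold max 0 g = S.inf' hS g := by
  intro S hS
  induction hS using Finset.Nonempty.cons_induction with
  | singleton a =>
    intro g hg
    rw [Finset.inf'_singleton,
      show ({a} : Finset ι).powerset = (insert a (∅ : Finset ι)).powerset from rfl,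
      Finset.sum_powerset_insert (Finset.notMem_empty a), Finset.powerset_empty]
    simp [max_eq_left (hg a)]
  | cons a T haT hT ih =>
    intro g hg
    have hga : 0 ≤ g a := hg a
    simp only [Finset.cons_eq_insert]
    rw [Finset.sum_powerset_insert haT]
    have hsub : ∀ I ∈ T.powerset, a ∉ I := fun I hI h => haT (Finset.mem_powerset.mp hI h)
    have step2 : ∑ I ∈ T.powerset,
        (-1 : ℝ) ^ ((insert a I).card - 1) * (insert a I).fold max 0 g
        = ∑ I ∈ T.powerset, ((-1 : ℝ) ^ I.card * g a + (-1 : ℝ) ^ I.card * I.fold max 0 g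
            - (-1 : ℝ) ^ I.card * min (g a) (I.fold max 0 g)) := by
      refine Finset.sum_congr rfl fun I hI => ?_
      have haI := hsub I hI
      have hmax : max (g a) (I.fold max 0 g)
          = g a + I.fold max 0 g - min (g a) (I.fold max 0 g) := by
        have := min_add_max (g a) (I.fold max 0 g); linarith
      rw [Finset.card_insert_of_notMem haI, Nat.add_sub_cancel, Finset.fold_insert haI, hmax]
      ring
    rw [step2, Finset.sum_sub_distrib, Finset.sum_add_distrib]
    have e1 : ∑ I ∈ T.powerset, (-1 : ℝ) ^ I.card * g a = 0 := by
      rw [← Finset.sum_mul, sum_neg_one_pow_real T hT, zero_mul]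
    have e2 : ∑ I ∈ T.powerset, (-1 : ℝ) ^ I.card * I.fold max 0 g = -(T.inf' hT g) := by
      rw [Finset.sum_congr rfl fun I _ =>
        sign_flip I _ (fun h => by subst h; simp), Finset.sum_neg_distrib, ih g hg]
    have e3 : ∑ I ∈ T.powerset, (-1 : ℝ) ^ I.card * min (g a) (I.fold max 0 g)
        = -(min (g a) (T.inf' hT g)) := by
      have hg' : ∀ i, 0 ≤ min (g a) (g i) := fun i => le_min hga (hg i)
      have : ∀ I ∈ T.powerset, (-1 : ℝ) ^ I.card * min (g a) (I.fold max 0 g)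
          = -((-1 : ℝ) ^ (I.card - 1) * I.fold max 0 (fun i => min (g a) (g i))) := by
        intro I hI
        rw [fold_max_min g (g a) hga I]
        exact sign_flip I _ (fun h => by subst h; simp [min_eq_right hga])
      rw [Finset.sum_congr rfl this, Finset.sum_neg_distrib,
        ih (fun i => min (g a) (g i)) hg', inf'_min T hT g (g a)]
    rw [ih g hg, e1, e2, e3, Finset.inf'_insert]
    ring
    exact hT

/-- The sup of `π` over a union of two sets is the max of the sups,
given `π` is nonneg and bounded. -/
private lemma sSup_image_union {Y : Type*} (π : Y → ℝ) (h0 : ∀ y, 0 ≤ π y)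
    (h1 : ∀ y, π y ≤ 1) (s t : Set Y) :
    sSup (π '' (s ∪ t)) = max (sSup (π '' s)) (sSup (π '' t)) := by
  have hbdd : ∀ u : Set Y, BddAbove (π '' u) := fun u =>
    ⟨1, fun x hx => by obtain ⟨y, _, rfl⟩ := hx; exact h1 y⟩
  have hnonneg : ∀ u : Set Y, u.Nonempty → 0 ≤ sSup (π '' u) := fun u ⟨y, hy⟩ =>
    le_trans (h0 y) (le_csSup (hbdd u) ⟨y, hy, rfl⟩)
  rcases Set.eq_empty_or_nonempty s with hs | hs
  · subst hs
    rcases Set.eq_empty_or_nonempty t with ht | ht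
    · subst ht; simp [Real.sSup_empty]
    · simp [Real.sSup_empty, max_eq_right (hnonneg t ht)]
  · rcases Set.eq_empty_or_nonempty t with ht | ht
    · subst ht
      simp [Real.sSup_empty, max_eq_left (hnonneg s hs)]
    · rw [Set.image_union]
      exact csSup_union (hbdd s) (hs.image π) (hbdd t) (ht.image π)

/-- A consonant plausibility function is ∞-alternating:
for every `k ≥ 1` and sets `A₁, …, A_k`,
`pl (⋂ i, A i) ≤ ∑_{∅ ≠ I ⊆ {1,…,k}} (-1)^{|I|-1} pl (⋃ i ∈ I, A i)`. -/
theorem stmt_4 {Y : Type*} [Nonempty Y] (π : Y → ℝ)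
    (h0 : ∀ y, 0 ≤ π y) (h1 : ∀ y, π y ≤ 1)
    (pl : Set Y → ℝ) (hpl : ∀ A : Set Y, pl A = sSup (π '' A)) :
    ∀ (k : ℕ), 1 ≤ k → ∀ A : Fin k → Set Y,
      pl (⋂ i, A i) ≤
        ∑ I ∈ Finset.univ.powerset.filter (fun I : Finset (Fin k) => I.Nonempty),
          (-1 : ℝ) ^ (I.card - 1) * pl (⋃ i ∈ I, A i) := by
  intro k hk A
  have hbdd : ∀ u : Set Y, BddAbove (π '' u) := fun u =>
    ⟨1, fun x hx => by obtain ⟨y, _, rfl⟩ := hx; exact h1 y⟩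
  set g : Fin k → ℝ := fun i => sSup (π '' A i) with hg
  have hg0 : ∀ i, 0 ≤ g i := by
    intro i
    rcases Set.eq_empty_or_nonempty (A i) with h | ⟨y, hy⟩
    · simp [hg, h, Real.sSup_empty]
    · exact le_trans (h0 y) (le_csSup (hbdd _) ⟨y, hy, rfl⟩)
  -- each pl of a finite union is a fold of maxima
  have hfold : ∀ I : Finset (Fin k), pl (⋃ i ∈ I, A i) = I.fold max 0 g := by
    intro I
    induction I using Finset.induction with
    | empty => simp [hpl, Real.sSup_empty]
    | @insert a I ha ih =>
      rw [Finset.fold_insert ha, ← ih, hpl, hpl,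
        show (⋃ i ∈ insert a I, A i) = A a ∪ ⋃ i ∈ I, A i by simp,
        sSup_image_union π h0 h1]
  -- the filtered sum equals the sum over the whole powerset
  have hsum : ∑ I ∈ Finset.univ.powerset.filter (fun I : Finset (Fin k) => I.Nonempty),
      (-1 : ℝ) ^ (I.card - 1) * pl (⋃ i ∈ I, A i)
      = ∑ I ∈ (Finset.univ : Finset (Fin k)).powerset,
        (-1 : ℝ) ^ (I.card - 1) * I.fold max 0 g := by
    rw [Finset.sum_congr rfl fun I _ => by rw [hfold I]]
    refine Finset.sum_subset (Finset.filter_subset _ _) ?_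
    intro I _ hI
    have : I = ∅ := by
      by_contra h
      exact hI (Finset.mem_filter.mpr ⟨by simp, Finset.nonempty_iff_ne_empty.mpr h⟩)
    simp [this]
  have huniv : (Finset.univ : Finset (Fin k)).Nonempty := by
    have : (0 : ℕ) < k := hk
    exact ⟨⟨0, this⟩, Finset.mem_univ _⟩
  rw [hsum, key_identity Finset.univ huniv g hg0]
  -- finally pl (⋂ i, A i) ≤ inf' g
  refine Finset.le_inf' _ _ fun i _ => ?_
  rw [hpl]
  rcases Set.eq_empty_or_nonempty (⋂ i, A i) with h | hne
  · rw [h]; simpa [Real.sSup_empty] using hg0 i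
  · refine csSup_le_csSup (hbdd _) (hne.image π) (Set.image_mono ?_)
    exact Set.iInter_subset _ i
end

section
/- Let (Y, Σ) be a measurable space and π : Y → [0,1] a measurable function with sup_{y∈Y} π(y) = 1, and let Π̄(A) = sup_{y∈A} π(y) for A ∈ Σ (with Π̄(∅) = 0). Then for every probability measure P on (Y, Σ), the following are equivalent: (i) P(A) ≤ Π̄(A) for every A ∈ Σ (i.e. P ∈ M(Π̄)); (ii) for every α ∈ (0,1], P({y ∈ Y : π(y) > α}) ≥ 1 − α. -/
open MeasureTheory
open scoped ENNReal

/-- For a consonant (plausibility) contour `π` with `sup π = 1`, a probability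
measure `P` belongs to the credal set `M(Π̄)` iff for every `α ∈ (0,1]` the
strong `α`-cut `{y : π y > α}` has `P`-probability at least `1 - α`. -/
theorem stmt_8 {Y : Type*} [MeasurableSpace Y] (π : Y → ℝ)
    (hmeas : Measurable π)
    (h0 : ∀ y, 0 ≤ π y) (h1 : ∀ y, π y ≤ 1)
    (hsup : sSup (Set.range π) = 1)
    (P : Measure Y) [IsProbabilityMeasure P] :
    (∀ A : Set Y, MeasurableSet A → P A ≤ ⨆ y ∈ A, ENNReal.ofReal (π y)) ↔
    (∀ α : ℝ, 0 < α → α ≤ 1 →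
      ENNReal.ofReal (1 - α) ≤ P {y | α < π y}) := by
  constructor
  · intro h α hα hα1
    have hAmeas : MeasurableSet {y | π y ≤ α} := measurableSet_le hmeas measurable_const
    have hP : P {y | π y ≤ α} ≤ ENNReal.ofReal α :=
      (h _ hAmeas).trans (iSup₂_le fun y hy => ENNReal.ofReal_le_ofReal hy)
    have hc : {y | α < π y} = {y | π y ≤ α}ᶜ := by ext y; simp [not_le]
    rw [hc, measure_compl hAmeas (measure_ne_top _ _), measure_univ]
    have e1 : ENNReal.ofReal (1 - α) = 1 - ENNReal.ofReal α := by
      rw [ENNReal.ofReal_sub _ hα.le, ENNReal.ofReal_one]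
    rw [e1]
    exact tsub_le_tsub_left hP 1
  · intro h A hA
    set t := ⨆ y ∈ A, ENNReal.ofReal (π y) with ht_def
    by_cases ht1 : 1 ≤ t
    · exact (prob_le_one).trans ht1
    push_neg at ht1
    have htne : t ≠ ∞ := (ht1.trans ENNReal.one_lt_top).ne
    refine ENNReal.le_of_forall_pos_le_add fun ε hε _ => ?_
    set α : ℝ := min (t.toReal + ε) 1 with hαdef
    have hα0 : 0 < α := lt_min (by positivity) one_pos
    have hα1 : α ≤ 1 := min_le_right _ _
    have hsub : A ⊆ {y | π y ≤ α} := by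
      intro y hy
      have h1' : ENNReal.ofReal (π y) ≤ t := le_iSup₂ (f := fun y _ => ENNReal.ofReal (π y)) y hy
      have h2' : π y ≤ t.toReal := by
        have := ENNReal.toReal_mono htne h1'
        rwa [ENNReal.toReal_ofReal (h0 y)] at this
      exact le_min (h2'.trans (le_add_of_nonneg_right (by positivity))) (h1 y)
    have hcut : MeasurableSet {y | α < π y} := measurableSet_lt measurable_const hmeas
    have hc : {y | π y ≤ α} = {y | α < π y}ᶜ := by ext y; simp [not_lt]
    have hPle : P {y | π y ≤ α} ≤ ENNReal.ofReal α := by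
      rw [hc, measure_compl hcut (measure_ne_top _ _), measure_univ]
      have := tsub_le_tsub_left (h α hα0 hα1) (1 : ℝ≥0∞)
      refine this.trans ?_
      rw [ENNReal.ofReal_sub _ hα0.le, ENNReal.ofReal_one,
        ENNReal.sub_sub_cancel ENNReal.one_ne_top (ENNReal.ofReal_le_one.mpr hα1)]
    calc P A ≤ P {y | π y ≤ α} := measure_mono hsub
      _ ≤ ENNReal.ofReal α := hPle
      _ ≤ ENNReal.ofReal (t.toReal + ε) := ENNReal.ofReal_le_ofReal (min_le_left _ _)
      _ = ENNReal.ofReal t.toReal + ENNReal.ofReal ε :=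
          ENNReal.ofReal_add ENNReal.toReal_nonneg ε.coe_nonneg
      _ = t + ε := by rw [ENNReal.ofReal_toReal htne, ENNReal.ofReal_coe_nnreal]
end

section
/- Let (Y, Σ) be a measurable space and π : Y → [0,1] a measurable function with sup_{y∈Y} π(y) = 1. Let Π̄(A) = sup_{y∈A} π(y) for A ∈ Σ (with Π̄(∅) = 0) and Π̲(A) = 1 − Π̄(Aᶜ). Then for every α ∈ [0,1], the strong α-cut of π equals the intersection of all measurable sets whose lower probability is at least 1 − α: {y ∈ Y : π(y) > α} = ⋂ {A ∈ Σ : Π̲(A) ≥ 1 − α}. -/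
/-- For a consonant contour `π` with `sup π = 1`, the strong `α`-cut
`{y : π y > α}` equals the intersection of all measurable sets whose lower
probability `Π̲(A) = 1 - sup_{y ∈ Aᶜ} π(y)` is at least `1 - α`
(the IHDR-CPR identity). -/
theorem stmt_9 {Y : Type*} [MeasurableSpace Y] (π : Y → ℝ)
    (hmeas : Measurable π)
    (h0 : ∀ y, 0 ≤ π y) (h1 : ∀ y, π y ≤ 1)
    (hsup : sSup (Set.range π) = 1)
    (α : ℝ) (hα0 : 0 ≤ α) (hα1 : α ≤ 1) :
    {y : Y | α < π y} =
      ⋂₀ {A : Set Y | MeasurableSet A ∧ 1 - α ≤ 1 - sSup (π '' Aᶜ)} := by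
  apply Set.Subset.antisymm
  · intro y hy A hA
    rcases hA with ⟨hAm, hAs⟩
    by_contra hyA
    have hle : π y ≤ sSup (π '' Aᶜ) :=
      le_csSup ⟨1, by rintro x ⟨z, -, rfl⟩; exact h1 z⟩ ⟨y, hyA, rfl⟩
    have : sSup (π '' Aᶜ) ≤ α := by linarith
    exact absurd hy (not_lt.mpr (hle.trans this))
  · intro y hy
    have hcut : MeasurableSet {y : Y | α < π y} :=
      measurableSet_lt measurable_const hmeas
    have hb : sSup (π '' {y : Y | α < π y}ᶜ) ≤ α := by
      apply Real.sSup_le _ hα0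
      rintro x ⟨z, hz, rfl⟩
      exact not_lt.mp (by simpa using hz)
    exact hy _ ⟨hcut, by linarith⟩
end

section
/- Let Y be a finite nonempty set equipped with the discrete σ-algebra, and let π : Y → [0,1] satisfy max_{y∈Y} π(y) = 1. Let Π̄(A) = max_{y∈A} π(y) for nonempty A ⊆ Y (Π̄(∅) = 0), Π̲(A) = 1 − Π̄(Aᶜ), and let M(Π̄) be the set of probability measures P on Y with P(A) ≤ Π̄(A) for all A ⊆ Y. Then Π̄ and Π̲ are the upper and lower envelopes of M(Π̄): for every A ⊆ Y, sup_{P∈M(Π̄)} P(A) = Π̄(A) and inf_{P∈M(Π̄)} P(A) = Π̲(A), and both the supremum and the infimum are attained by elements of M(Π̄). -/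
/-- On a finite set with a consonant contour `π` (attaining the value 1),
the upper probability `Π̄(A) = max_{y ∈ A} π(y)` and its dual
`Π̲(A) = 1 - Π̄(Aᶜ)` are the attained upper and lower envelopes of the credal
set `M(Π̄)` of probability mass functions dominated by `Π̄`. -/
theorem stmt_10 {Y : Type*} [Fintype Y] [Nonempty Y] [DecidableEq Y] (π : Y → ℝ)
    (h0 : ∀ y, 0 ≤ π y) (h1 : ∀ y, π y ≤ 1) (hmax : ∃ y, π y = 1)
    (Pi : Finset Y → ℝ) (hPi : ∀ A : Finset Y, Pi A = sSup (π '' (A : Set Y)))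
    (M : Set (Y → ℝ))
    (hM : M = {p | (∀ y, 0 ≤ p y) ∧ (∑ y, p y) = 1 ∧
      ∀ A : Finset Y, ∑ y ∈ A, p y ≤ Pi A}) :
    ∀ A : Finset Y,
      IsGreatest ((fun p : Y → ℝ => ∑ y ∈ A, p y) '' M) (Pi A) ∧
      IsLeast ((fun p : Y → ℝ => ∑ y ∈ A, p y) '' M) (1 - Pi Aᶜ) := by
  obtain ⟨ys, hys⟩ := hmax
  have hfin : ∀ A : Finset Y, (π '' (A : Set Y)).Finite :=
    fun A => A.finite_toSet.image π
  have hle : ∀ (A : Finset Y) (c : Y), c ∈ A → π c ≤ Pi A := by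
    intro A c hc
    rw [hPi]
    exact le_csSup (hfin A).bddAbove ⟨c, by simpa using hc, rfl⟩
  have hPinn : ∀ A : Finset Y, 0 ≤ Pi A := by
    intro A
    rcases A.eq_empty_or_nonempty with h | ⟨c, hc⟩
    · simp [hPi, h, Real.sSup_empty]
    · exact (h0 c).trans (hle A c hc)
  have hPile1 : ∀ A : Finset Y, Pi A ≤ 1 := by
    intro A
    rcases A.eq_empty_or_nonempty with h | ⟨c, hc⟩
    · simp [hPi, h, Real.sSup_empty]
    · rw [hPi]
      refine csSup_le ⟨π c, ⟨c, by simpa using hc, rfl⟩⟩ ?_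
      rintro x ⟨y, -, rfl⟩
      exact h1 y
  have hattain : ∀ A : Finset Y, A.Nonempty → ∃ a ∈ A, Pi A = π a := by
    rintro A ⟨c, hc⟩
    have hne : (π '' (A : Set Y)).Nonempty := ⟨π c, c, by simpa using hc, rfl⟩
    have hmem := hne.csSup_mem (hfin A)
    rw [← hPi A] at hmem
    obtain ⟨a, ha, haeq⟩ := hmem
    exact ⟨a, by simpa using ha, haeq.symm⟩
  set q : Y → Y → ℝ :=
    fun c y => (if y = c then π c else 0) + (if y = ys then 1 - π c else 0) with hq
  have hsumq : ∀ (c : Y) (B : Finset Y), ∑ y ∈ B, q c y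
      = (if c ∈ B then π c else 0) + (if ys ∈ B then 1 - π c else 0) := by
    intro c B
    simp [hq, Finset.sum_add_distrib, Finset.sum_ite_eq' B]
  have hqM : ∀ c, q c ∈ M := by
    intro c
    rw [hM]
    refine ⟨?_, ?_, ?_⟩
    · intro y
      have h0c := h0 c
      have h1c := h1 c
      simp only [hq]
      split_ifs <;> linarith
    · rw [show (∑ y, q c y) = ∑ y ∈ Finset.univ, q c y from rfl, hsumq]
      simp
    · intro B
      rw [hsumq]
      have hB1 : ys ∈ B → (1:ℝ) ≤ Pi B := fun h => hys ▸ hle B ys h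
      have h0c := h0 c
      split_ifs with hcB hyB hyB
      · linarith [hB1 hyB]
      · linarith [hle B c hcB]
      · linarith [hB1 hyB]
      · simpa using hPinn B
  intro A
  constructor
  · constructor
    · rcases A.eq_empty_or_nonempty with h | hA
      · refine ⟨q ys, hqM ys, ?_⟩
        simp [h, hPi, Real.sSup_empty]
      · obtain ⟨a, haA, haeq⟩ := hattain A hA
        refine ⟨q a, hqM a, ?_⟩
        show ∑ y ∈ A, q a y = Pi A
        rw [hsumq, if_pos haA]
        by_cases hyA : ys ∈ A
        · have h1' : Pi A = 1 := le_antisymm (hPile1 A) (hys ▸ hle A ys hyA)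
          have hpa : π a = 1 := by rw [← haeq, h1']
          rw [if_pos hyA, hpa, h1']
          ring
        · rw [if_neg hyA, haeq]
          ring
    · rintro _ ⟨p, hp, rfl⟩
      rw [hM] at hp
      exact hp.2.2 A
  · constructor
    · by_cases hyA : ys ∈ A
      · rcases Aᶜ.eq_empty_or_nonempty with h | hA
        · refine ⟨q ys, hqM ys, ?_⟩
          show ∑ y ∈ A, q ys y = 1 - Pi Aᶜ
          rw [hsumq, if_pos hyA, if_pos hyA, hys]
          simp [h, hPi, Real.sSup_empty]
        · obtain ⟨b, hbA, hbeq⟩ := hattain Aᶜ hA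
          have hbA' : b ∉ A := by simpa using hbA
          refine ⟨q b, hqM b, ?_⟩
          show ∑ y ∈ A, q b y = 1 - Pi Aᶜ
          rw [hsumq, if_neg hbA', if_pos hyA, hbeq]
          ring
      · have hyc : ys ∈ Aᶜ := by simpa using hyA
        have h1' : Pi Aᶜ = 1 := le_antisymm (hPile1 _) (hys ▸ hle _ ys hyc)
        refine ⟨q ys, hqM ys, ?_⟩
        show ∑ y ∈ A, q ys y = 1 - Pi Aᶜ
        rw [hsumq, if_neg hyA, if_neg hyA, h1']
        ring
    · rintro _ ⟨p, hp, rfl⟩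
      rw [hM] at hp
      have h2 := hp.2.2 Aᶜ
      have hsplit : ∑ y ∈ A, p y + ∑ y ∈ Aᶜ, p y = 1 := by
        rw [Finset.sum_add_sum_compl]
        exact hp.2.1
      linarith
end

section
/- Let (Y, Σ) be a measurable space and n ≥ 1. Let Ψ : Y^n × Y → ℝ be measurable and invariant under permutations of the n coordinates of its first argument. Define F : Y^{n+1} → ℝ^{n+1} by F(y)_i = Ψ(y_{−i}, y_i) for i ∈ {1,…,n+1}, where y_{−i} ∈ Y^n is the vector obtained by deleting the i-th coordinate of y (in the induced order). If μ is a probability measure on Y^{n+1} that is invariant under every permutation of the n+1 coordinates, then the pushforward measure F_*μ on ℝ^{n+1} is also invariant under every permutation of the n+1 coordinates. -/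
open MeasureTheory

lemma succAbove_perm_aux {n : ℕ} (τ : Equiv.Perm (Fin (n + 1))) (i : Fin (n + 1)) :
    ∃ σ : Equiv.Perm (Fin n), ∀ j : Fin n,
      τ (i.succAbove j) = (τ i).succAbove (σ j) := by
  set e : Option (Fin n) ≃ Option (Fin n) :=
    (finSuccEquiv' i).symm.trans (τ.trans (finSuccEquiv' (τ i))) with he
  have hnone : e none = none := by
    simp [he, finSuccEquiv'_at]
  refine ⟨Equiv.removeNone e, fun j => ?_⟩
  have hsome : ∃ x', e (some j) = some x' := by
    rcases h : e (some j) with _ | x'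
    · exact absurd (e.injective (h.trans hnone.symm)) (by simp)
    · exact ⟨x', rfl⟩
  have h1 : some (Equiv.removeNone e j) = e (some j) := Equiv.removeNone_some e hsome
  have h2 : e (some j) = finSuccEquiv' (τ i) (τ (i.succAbove j)) := by
    simp [he]
  have h3 : (finSuccEquiv' (τ i)).symm (some (Equiv.removeNone e j))
      = τ (i.succAbove j) := by
    rw [h1, h2]
    exact (finSuccEquiv' (τ i)).symm_apply_apply _
  rw [← h3, finSuccEquiv'_symm_some]

/-- The non-conformity transform `Y^{n+1} → ℝ^{n+1}`,
`F(y)_i = Ψ(y_{-i}, y_i)`, preserves exchangeability: if `μ` is invariant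
under all permutations of the `n+1` coordinates, so is the pushforward
`F_* μ`. -/
theorem stmt_12 {Y : Type*} [MeasurableSpace Y] (n : ℕ) (hn : 1 ≤ n)
    (Ψ : (Fin n → Y) → Y → ℝ)
    (hΨmeas : Measurable (fun p : (Fin n → Y) × Y => Ψ p.1 p.2))
    (hΨsym : ∀ (σ : Equiv.Perm (Fin n)) (v : Fin n → Y) (x : Y),
      Ψ (fun j => v (σ j)) x = Ψ v x)
    (F : (Fin (n + 1) → Y) → (Fin (n + 1) → ℝ))
    (hF : ∀ (y : Fin (n + 1) → Y) (i : Fin (n + 1)),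
      F y i = Ψ (fun j => y (i.succAbove j)) (y i))
    (μ : Measure (Fin (n + 1) → Y)) [IsProbabilityMeasure μ]
    (hμ : ∀ τ : Equiv.Perm (Fin (n + 1)),
      Measure.map (fun y : Fin (n + 1) → Y => fun i => y (τ i)) μ = μ) :
    ∀ τ : Equiv.Perm (Fin (n + 1)),
      Measure.map (fun t : Fin (n + 1) → ℝ => fun i => t (τ i))
        (Measure.map F μ) = Measure.map F μ := by
  intro τ
  have hFmeas : Measurable F := by
    rw [measurable_pi_iff]
    intro i
    have : (fun y : Fin (n + 1) → Y => F y i)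
        = fun y => Ψ (fun j => y (i.succAbove j)) (y i) := by
      funext y; exact hF y i
    rw [this]
    have hg : Measurable fun y : Fin (n + 1) → Y =>
        ((fun j => y (i.succAbove j) : Fin n → Y), y i) :=
      (measurable_pi_lambda _ fun j => measurable_pi_apply _).prodMk
        (measurable_pi_apply i)
    exact hΨmeas.comp hg
  have hPmeas : Measurable (fun t : Fin (n + 1) → ℝ => fun i => t (τ i)) :=
    measurable_pi_lambda _ fun i => measurable_pi_apply _
  have hPYmeas : Measurable (fun y : Fin (n + 1) → Y => fun i => y (τ i)) :=
    measurable_pi_lambda _ fun i => measurable_pi_apply _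
  have hcomm : (fun t : Fin (n + 1) → ℝ => fun i => t (τ i)) ∘ F
      = F ∘ (fun y : Fin (n + 1) → Y => fun i => y (τ i)) := by
    funext y
    funext i
    simp only [Function.comp_apply]
    rw [hF, hF]
    obtain ⟨σ, hσ⟩ := succAbove_perm_aux τ i
    have : (fun j => y (τ (i.succAbove j))) = fun j => y ((τ i).succAbove (σ j)) := by
      funext j; rw [hσ j]
    rw [this]
    exact (hΨsym σ (fun j => y ((τ i).succAbove j)) (y (τ i))).symm
  rw [Measure.map_map hPmeas hFmeas, hcomm, ← Measure.map_map hFmeas hPYmeas, hμ]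
end

section
/- Let n ≥ 0 and let μ be a probability measure on ℝ^{n+1} (with the Borel product σ-algebra) that is invariant under every permutation of the n+1 coordinates. Define p : ℝ^{n+1} → [0,1] by p(t) = (n+1)^{−1} · |{i ∈ {1,…,n+1} : t_i ≥ t_{n+1}}|. Then for every α ∈ [0,1], μ({t : p(t) ≤ α}) ≤ α; equivalently, μ({t : p(t) > α}) ≥ 1 − α. -/
open MeasureTheory
open scoped ENNReal

namespace Stmt13Aux

variable {n : ℕ}

/-- count of indices `i` with `t j ≤ t i`. -/
noncomputable def cnt (t : Fin (n + 1) → ℝ) (j : Fin (n + 1)) : ℕ :=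
  (Finset.univ.filter fun i => t j ≤ t i).card

lemma cnt_measurable (j : Fin (n + 1)) :
    Measurable (fun t : Fin (n + 1) → ℝ => cnt t j) := by
  simp only [cnt, Finset.card_filter]
  exact Finset.measurable_sum _ fun i _ =>
    Measurable.ite (measurableSet_le (measurable_pi_apply j) (measurable_pi_apply i))
      measurable_const measurable_const

lemma cnt_perm (t : Fin (n + 1) → ℝ) (τ : Equiv.Perm (Fin (n + 1))) (j : Fin (n + 1)) :
    cnt (fun i => t (τ i)) j = cnt t (τ j) := by
  unfold cnt
  exact Finset.card_equiv τ (by simp)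

lemma filter_card_le (t : Fin (n + 1) → ℝ) (k : ℕ) :
    (Finset.univ.filter fun j : Fin (n + 1) => cnt t j ≤ k).card ≤ k := by
  set S := Finset.univ.filter fun j : Fin (n + 1) => cnt t j ≤ k with hS
  rcases S.eq_empty_or_nonempty with h | h
  · simp [h]
  · obtain ⟨j, hjS, hjmin⟩ := S.exists_min_image t h
    have hsub : S ⊆ Finset.univ.filter fun i => t j ≤ t i := by
      intro i hi
      simp only [Finset.mem_filter, Finset.mem_univ, true_and]
      exact hjmin i hi
    calc S.card ≤ cnt t j := Finset.card_le_card hsub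
    _ ≤ k := by simpa [hS] using (Finset.mem_filter.mp hjS).2

lemma ncard_setOf_eq {q : Fin (n + 1) → Prop} [DecidablePred q] :
    ({i | q i} : Set (Fin (n + 1))).ncard = (Finset.univ.filter q).card := by
  rw [Set.ncard_eq_toFinset_card']
  simp

end Stmt13Aux

open Stmt13Aux

/-- Validity of the rank-based conformal p-value: for any exchangeable
probability measure `μ` on `ℝ^{n+1}` and
`p(t) = |{i : t_i ≥ t_{n+1}}| / (n+1)`, we have `μ(p ≤ α) ≤ α`, equivalently
`μ(p > α) ≥ 1 - α`, for every `α ∈ [0,1]`. -/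
theorem stmt_13 (n : ℕ) (μ : Measure (Fin (n + 1) → ℝ)) [IsProbabilityMeasure μ]
    (hμ : ∀ τ : Equiv.Perm (Fin (n + 1)),
      Measure.map (fun t : Fin (n + 1) → ℝ => fun i => t (τ i)) μ = μ)
    (p : (Fin (n + 1) → ℝ) → ℝ)
    (hp : ∀ t : Fin (n + 1) → ℝ,
      p t = (({i | t (Fin.last n) ≤ t i} : Set (Fin (n + 1))).ncard : ℝ) / (n + 1)) :
    ∀ α : ℝ, 0 ≤ α → α ≤ 1 →
      μ {t | p t ≤ α} ≤ ENNReal.ofReal α ∧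
      ENNReal.ofReal (1 - α) ≤ μ {t | α < p t} := by
  intro α hα0 hα1
  classical
  set k := ⌊α * (n + 1)⌋₊ with hkdef
  set A : Fin (n + 1) → Set (Fin (n + 1) → ℝ) := fun j => {t | cnt t j ≤ k} with hA
  have hAmeas : ∀ j, MeasurableSet (A j) := fun j =>
    (cnt_measurable j) (measurableSet_Iic : MeasurableSet (Set.Iic k))
  -- the event {p ≤ α} is A (Fin.last n)
  have hset : {t | p t ≤ α} = A (Fin.last n) := by
    ext t
    simp only [Set.mem_setOf_eq, hA, hp t]
    rw [ncard_setOf_eq]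
    have hpos : (0 : ℝ) < (n : ℝ) + 1 := by positivity
    rw [div_le_iff₀ hpos]
    constructor
    · intro h
      exact Nat.le_floor (by exact_mod_cast h)
    · intro h
      have : ((Finset.univ.filter fun i => t (Fin.last n) ≤ t i).card : ℝ) ≤ (k : ℝ) := by
        exact_mod_cast h
      exact this.trans (Nat.floor_le (by positivity))
  -- exchangeability: all the A j have equal measure
  have hμA : ∀ j, μ (A j) = μ (A (Fin.last n)) := by
    intro j
    set τ := Equiv.swap j (Fin.last n) with hτdef
    have hT : Measurable (fun t : Fin (n + 1) → ℝ => fun i => t (τ i)) :=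
      measurable_pi_lambda _ fun i => measurable_pi_apply (τ i)
    have h1 : μ (A (Fin.last n)) =
        μ ((fun t : Fin (n + 1) → ℝ => fun i => t (τ i)) ⁻¹' A (Fin.last n)) := by
      conv_lhs => rw [← hμ τ]
      rw [Measure.map_apply hT (hAmeas _)]
    have h2 : (fun t : Fin (n + 1) → ℝ => fun i => t (τ i)) ⁻¹' A (Fin.last n) = A j := by
      ext t
      simp only [Set.mem_preimage, hA, Set.mem_setOf_eq]
      rw [cnt_perm]
      simp [hτdef, Equiv.swap_apply_right]
    rw [h1, h2]
  -- counting bound: (n+1) * μ (A last) ≤ k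
  have hsum : ((n + 1 : ℕ) : ℝ≥0∞) * μ (A (Fin.last n)) ≤ (k : ℝ≥0∞) := by
    have h1 : ∑ j : Fin (n + 1), μ (A j) = ((n + 1 : ℕ) : ℝ≥0∞) * μ (A (Fin.last n)) := by
      rw [Finset.sum_congr rfl fun j _ => hμA j]
      simp [Finset.card_univ, mul_comm]
    have h2 : ∑ j : Fin (n + 1), μ (A j)
        = ∫⁻ t, ∑ j : Fin (n + 1), (A j).indicator (fun _ => (1 : ℝ≥0∞)) t ∂μ := by
      rw [lintegral_finset_sum _ fun j _ => measurable_const.indicator (hAmeas j)]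
      refine Finset.sum_congr rfl fun j _ => ?_
      exact (lintegral_indicator_one (hAmeas j)).symm
    have h3 : ∀ t, ∑ j : Fin (n + 1), (A j).indicator (fun _ => (1 : ℝ≥0∞)) t
        ≤ (k : ℝ≥0∞) := by
      intro t
      have heq : ∑ j : Fin (n + 1), (A j).indicator (fun _ => (1 : ℝ≥0∞)) t
          = ((Finset.univ.filter fun j : Fin (n + 1) => cnt t j ≤ k).card : ℝ≥0∞) := by
        rw [Finset.card_filter]
        push_cast
        refine Finset.sum_congr rfl fun j _ => ?_
        by_cases h : cnt t j ≤ k <;> simp [Set.indicator, hA, h]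
      rw [heq]
      exact_mod_cast filter_card_le t k
    calc ((n + 1 : ℕ) : ℝ≥0∞) * μ (A (Fin.last n)) = ∑ j : Fin (n + 1), μ (A j) := h1.symm
    _ = ∫⁻ t, ∑ j : Fin (n + 1), (A j).indicator (fun _ => (1 : ℝ≥0∞)) t ∂μ := h2
    _ ≤ ∫⁻ _, (k : ℝ≥0∞) ∂μ := lintegral_mono h3
    _ = (k : ℝ≥0∞) := by simp
  have hk_le : (k : ℝ≥0∞) ≤ ((n + 1 : ℕ) : ℝ≥0∞) * ENNReal.ofReal α := by
    have hkR : (k : ℝ) ≤ α * (n + 1) := Nat.floor_le (by positivity)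
    calc (k : ℝ≥0∞) = ENNReal.ofReal (k : ℝ) := by simp
    _ ≤ ENNReal.ofReal (α * (n + 1)) := ENNReal.ofReal_le_ofReal hkR
    _ = ENNReal.ofReal α * ENNReal.ofReal ((n : ℝ) + 1) := ENNReal.ofReal_mul hα0
    _ = ((n + 1 : ℕ) : ℝ≥0∞) * ENNReal.ofReal α := by
        rw [mul_comm]
        congr 1
        rw [show ((n : ℝ) + 1) = ((n + 1 : ℕ) : ℝ) by push_cast; ring]
        exact ENNReal.ofReal_natCast _
  have hmain : μ (A (Fin.last n)) ≤ ENNReal.ofReal α := by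
    have h := hsum.trans hk_le
    have hne : ((n + 1 : ℕ) : ℝ≥0∞) ≠ 0 := by simp
    have htop : ((n + 1 : ℕ) : ℝ≥0∞) ≠ ⊤ := by simp
    exact (ENNReal.mul_le_mul_iff_right hne htop).mp h
  constructor
  · rw [hset]; exact hmain
  · have hcompl : {t | α < p t} = {t | p t ≤ α}ᶜ := by
      ext t; simp [not_le]
    rw [hcompl, hset, prob_compl_eq_one_sub (hAmeas _)]
    have h1 : ENNReal.ofReal (1 - α) = 1 - ENNReal.ofReal α := by
      rw [ENNReal.ofReal_sub _ hα0, ENNReal.ofReal_one]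
    rw [h1]
    exact tsub_le_tsub_left hmain 1
end

section
/- Let (Y, Σ) be a measurable space, n ≥ 1, and let Ψ : Y^n × Y → ℝ be measurable and invariant under permutations of the n coordinates of its first argument. For y ∈ Y^{n+1} define the scores T_i(y) = Ψ(y_{−i}, y_i) for i ∈ {1,…,n+1}, where y_{−i} is y with its i-th coordinate removed, and define the conformal transducer π(y) = (n+1)^{−1} · |{i : T_i(y) ≥ T_{n+1}(y)}|. Then for every probability measure μ on Y^{n+1} that is invariant under every permutation of the n+1 coordinates, and for every α ∈ [0,1], μ({y ∈ Y^{n+1} : π(y) > α}) ≥ 1 − α. In other words, the conformal prediction region R_α = {ỹ : π > α} covers Y_{n+1} with probability at least 1 − α, uniformly over all exchangeable distributions and all n. -/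
open MeasureTheory
open scoped ENNReal

/-- If two injections into a type have the same range, composing with them
gives the same function up to a permutation of the index. -/
lemma conf_range_perm {n : ℕ} {β : Type*} (f g : Fin n → β)
    (hf : Function.Injective f) (hg : Function.Injective g)
    (h : Set.range f = Set.range g) :
    ∃ σ : Equiv.Perm (Fin n), ∀ k, g (σ k) = f k := by
  refine ⟨(Equiv.ofInjective f hf).trans ((Equiv.setCongr h).trans
    (Equiv.ofInjective g hg).symm), fun k => ?_⟩
  simp only [Equiv.trans_apply]
  rw [Equiv.apply_ofInjective_symm hg]
  rfl

/-- Pointwise counting lemma: at most `m` indices have at most `m` scores above them. -/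
lemma conf_count_le {N : ℕ} (t : Fin N → ℝ) (m : ℕ) :
    (Finset.univ.filter fun i =>
      (Finset.univ.filter fun j => t i ≤ t j).card ≤ m).card ≤ m := by
  set S := Finset.univ.filter fun i : Fin N =>
      (Finset.univ.filter fun j => t i ≤ t j).card ≤ m with hS
  rcases S.eq_empty_or_nonempty with h | h
  · simp [h]
  · obtain ⟨i₀, hi₀S, hmin⟩ := S.exists_min_image t h
    have hsub : S ⊆ Finset.univ.filter fun j => t i₀ ≤ t j := by
      intro i hi
      simp only [Finset.mem_filter, Finset.mem_univ, true_and]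
      exact hmin i hi
    have hcard := Finset.card_le_card hsub
    have hi₀ : (Finset.univ.filter fun j => t i₀ ≤ t j).card ≤ m := by
      simpa [hS] using hi₀S
    exact hcard.trans hi₀

/-- Uniform coverage guarantee of conformal prediction: with scores
`T_i(y) = Ψ(y_{-i}, y_i)` and conformal transducer
`π(y) = |{i : T_i(y) ≥ T_{n+1}(y)}| / (n+1)`, for every exchangeable
probability measure `μ` on `Y^{n+1}` and every `α ∈ [0,1]`,
`μ({y : π(y) > α}) ≥ 1 - α`. -/
theorem stmt_14 {Y : Type*} [MeasurableSpace Y] (n : ℕ) (hn : 1 ≤ n)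
    (Ψ : (Fin n → Y) → Y → ℝ)
    (hΨmeas : Measurable (fun p : (Fin n → Y) × Y => Ψ p.1 p.2))
    (hΨsym : ∀ (σ : Equiv.Perm (Fin n)) (v : Fin n → Y) (x : Y),
      Ψ (fun j => v (σ j)) x = Ψ v x)
    (T : Fin (n + 1) → (Fin (n + 1) → Y) → ℝ)
    (hT : ∀ (i : Fin (n + 1)) (y : Fin (n + 1) → Y),
      T i y = Ψ (fun j => y (i.succAbove j)) (y i))
    (π : (Fin (n + 1) → Y) → ℝ)
    (hπ : ∀ y : Fin (n + 1) → Y,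
      π y = (({i | T (Fin.last n) y ≤ T i y} : Set (Fin (n + 1))).ncard : ℝ) / (n + 1)) :
    ∀ (μ : Measure (Fin (n + 1) → Y)), IsProbabilityMeasure μ →
      (∀ τ : Equiv.Perm (Fin (n + 1)),
        Measure.map (fun y : Fin (n + 1) → Y => fun i => y (τ i)) μ = μ) →
      ∀ α : ℝ, 0 ≤ α → α ≤ 1 →
        ENNReal.ofReal (1 - α) ≤ μ {y | α < π y} := by
  intro μ hprob hexch α hα0 hα1
  -- measurability of the scores
  have hTmeas : ∀ i, Measurable (T i) := by
    intro i
    have : T i = (fun p : (Fin n → Y) × Y => Ψ p.1 p.2) ∘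
        (fun y : Fin (n + 1) → Y => ((fun j => y (i.succAbove j)), y i)) := by
      funext y; simp [hT]
    rw [this]
    exact hΨmeas.comp ((measurable_pi_lambda _ fun j => measurable_pi_apply _).prodMk
      (measurable_pi_apply i))
  -- the equivariance of scores under permutations
  have hTequi : ∀ (τ : Equiv.Perm (Fin (n + 1))) (j : Fin (n + 1)) (y : Fin (n + 1) → Y),
      T j (fun i => y (τ i)) = T (τ j) y := by
    intro τ j y
    have hf : Function.Injective (fun k : Fin n => τ (j.succAbove k)) :=
      τ.injective.comp (Fin.succAbove_right_injective)
    have hg : Function.Injective (τ j).succAbove := Fin.succAbove_right_injective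
    have hrange : Set.range (fun k : Fin n => τ (j.succAbove k))
        = Set.range (τ j).succAbove := by
      rw [Fin.range_succAbove]
      have : Set.range (fun k : Fin n => τ (j.succAbove k)) = τ '' Set.range j.succAbove := by
        rw [← Set.range_comp]; rfl
      rw [this, Fin.range_succAbove, ← Set.image_singleton,
        ← Set.image_compl_eq τ.bijective]
    obtain ⟨σ, hσ⟩ := conf_range_perm _ _ hf hg hrange
    rw [hT, hT]
    have : (fun k : Fin n => y (τ (j.succAbove k)))
        = fun k => (fun l : Fin n => y ((τ j).succAbove l)) (σ k) := by
      funext k; simp [hσ k]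
    rw [this, hΨsym σ (fun l => y ((τ j).succAbove l)) (y (τ j))]
  -- counting function and threshold
  set m : ℕ := ⌊α * (n + 1)⌋₊ with hm
  set c : Fin (n + 1) → (Fin (n + 1) → Y) → ℕ :=
    fun i y => (Finset.univ.filter fun j => T i y ≤ T j y).card with hc
  have hcmeas : ∀ i, Measurable (c i) := by
    intro i
    have : c i = fun y => ∑ j : Fin (n + 1), if T i y ≤ T j y then 1 else 0 := by
      funext y; rw [hc]; exact Finset.card_filter _ _
    rw [this]
    exact Finset.measurable_sum _ fun j _ =>
      Measurable.ite (measurableSet_le (hTmeas i) (hTmeas j)) measurable_const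
        measurable_const
  set B : Fin (n + 1) → Set (Fin (n + 1) → Y) := fun i => {y | c i y ≤ m} with hB
  have hBmeas : ∀ i, MeasurableSet (B i) := by
    intro i
    have : B i = c i ⁻¹' {k : ℕ | k ≤ m} := rfl
    rw [this]
    exact (hcmeas i) ((Set.to_countable _).measurableSet)
  -- all B i have the same measure, by exchangeability
  have hBeq : ∀ i, μ (B i) = μ (B (Fin.last n)) := by
    intro i
    set τ : Equiv.Perm (Fin (n + 1)) := Equiv.swap i (Fin.last n) with hτ
    have hmap := hexch τ
    have hmeasτ : Measurable (fun y : Fin (n + 1) → Y => fun k => y (τ k)) :=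
      measurable_pi_lambda _ fun k => measurable_pi_apply _
    have hpre : (fun y : Fin (n + 1) → Y => fun k => y (τ k)) ⁻¹' (B (Fin.last n)) = B i := by
      ext y
      simp only [Set.mem_preimage, hB, Set.mem_setOf_eq, hc]
      have h1 : ∀ j, T j (fun k => y (τ k)) = T (τ j) y := fun j => hTequi τ j y
      have hlast : τ (Fin.last n) = i := Equiv.swap_apply_right i (Fin.last n)
      have : (Finset.univ.filter fun j => T (Fin.last n) (fun k => y (τ k))
            ≤ T j (fun k => y (τ k))).card
          = (Finset.univ.filter fun j => T i y ≤ T j y).card := by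
        simp only [h1, hlast]
        refine Finset.card_equiv τ fun j => ?_
        simp only [Finset.mem_filter, Finset.mem_univ, true_and]
      rw [this]
    calc μ (B i) = μ ((fun y : Fin (n + 1) → Y => fun k => y (τ k)) ⁻¹' (B (Fin.last n))) := by
          rw [hpre]
      _ = (Measure.map (fun y : Fin (n + 1) → Y => fun k => y (τ k)) μ) (B (Fin.last n)) := by
          rw [Measure.map_apply hmeasτ (hBmeas (Fin.last n))]
      _ = μ (B (Fin.last n)) := by rw [hmap]
  -- sum of measures bounded by m
  have hsum : ∑ i : Fin (n + 1), μ (B i) ≤ (m : ℝ≥0∞) := by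
    calc ∑ i : Fin (n + 1), μ (B i)
        = ∫⁻ y, ∑ i : Fin (n + 1), (B i).indicator (1 : (Fin (n + 1) → Y) → ℝ≥0∞) y ∂μ := by
          rw [lintegral_finset_sum _ fun i _ => measurable_one.indicator (hBmeas i)]
          exact Finset.sum_congr rfl fun i _ => (lintegral_indicator_one (hBmeas i)).symm
      _ ≤ ∫⁻ _, (m : ℝ≥0∞) ∂μ := by
          apply lintegral_mono
          intro y
          dsimp only
          have heq : ∑ i : Fin (n + 1), (B i).indicator (1 : (Fin (n + 1) → Y) → ℝ≥0∞) y
              = ((Finset.univ.filter fun i : Fin (n + 1) => y ∈ B i).card : ℝ≥0∞) := by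
            rw [Finset.card_filter]
            push_cast
            apply Finset.sum_congr rfl
            intro i _
            by_cases h : y ∈ B i <;> simp [Set.indicator_apply, h]
          rw [heq]
          have hcount : (Finset.univ.filter fun i : Fin (n + 1) => y ∈ B i).card ≤ m := by
            have := conf_count_le (fun i => T i y) m
            simpa [hB, hc, Set.mem_setOf_eq] using this
          exact_mod_cast hcount
      _ = (m : ℝ≥0∞) := by simp
  -- bound μ (B last)
  have hBlast : μ (B (Fin.last n)) ≤ ENNReal.ofReal α := by
    have h1 : ((n : ℝ≥0∞) + 1) * μ (B (Fin.last n)) ≤ (m : ℝ≥0∞) := by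
      have : ∑ i : Fin (n + 1), μ (B i) = ((n : ℝ≥0∞) + 1) * μ (B (Fin.last n)) := by
        rw [Finset.sum_congr rfl fun i _ => hBeq i]
        simp [Finset.card_univ, mul_comm]
      rw [← this]; exact hsum
    have h2 : (m : ℝ≥0∞) ≤ ENNReal.ofReal α * ((n : ℝ≥0∞) + 1) := by
      have hle : (m : ℝ) ≤ α * (n + 1) := Nat.floor_le (by positivity)
      calc (m : ℝ≥0∞) = ENNReal.ofReal (m : ℝ) := by simp
        _ ≤ ENNReal.ofReal (α * (n + 1)) := ENNReal.ofReal_le_ofReal hle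
        _ = ENNReal.ofReal α * ENNReal.ofReal ((n : ℝ) + 1) := by
            rw [ENNReal.ofReal_mul hα0]
        _ = ENNReal.ofReal α * ((n : ℝ≥0∞) + 1) := by
            congr 1
            rw [show ((n : ℝ) + 1) = ((n + 1 : ℕ) : ℝ) by push_cast; ring,
              ENNReal.ofReal_natCast]
            push_cast; ring
    have hne : ((n : ℝ≥0∞) + 1) ≠ 0 := by simp
    have hne' : ((n : ℝ≥0∞) + 1) ≠ ⊤ := by simp
    rw [mul_comm, ← ENNReal.le_div_iff_mul_le (Or.inl hne) (Or.inl hne')] at h1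
    refine h1.trans ?_
    rw [ENNReal.div_le_iff hne hne']
    exact h2
  -- identify the event with the complement of B last
  have hset : {y | α < π y} = (B (Fin.last n))ᶜ := by
    ext y
    simp only [Set.mem_setOf_eq, Set.mem_compl_iff, hB, Set.mem_setOf_eq, hc, not_le]
    have hncard : ({i | T (Fin.last n) y ≤ T i y} : Set (Fin (n + 1))).ncard
        = (Finset.univ.filter fun j => T (Fin.last n) y ≤ T j y).card := by
      rw [Set.ncard_eq_toFinset_card', Set.toFinset_setOf]
    rw [hπ y, hncard]
    set N := (Finset.univ.filter fun j => T (Fin.last n) y ≤ T j y).card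
    constructor
    · intro h
      have : α * (n + 1) < (N : ℝ) := by
        have hpos : (0 : ℝ) < (n : ℝ) + 1 := by positivity
        calc α * (n + 1) < ((N : ℝ) / (n + 1)) * (n + 1) := by
              apply mul_lt_mul_of_pos_right h hpos
          _ = (N : ℝ) := by field_simp
      exact (Nat.floor_lt (by positivity)).mpr this
    · intro h
      have : α * (n + 1) < (N : ℝ) := by
        have := (Nat.floor_lt (by positivity)).mp h
        exact this
      have hpos : (0 : ℝ) < (n : ℝ) + 1 := by positivity
      rw [lt_div_iff₀ hpos]
      exact this
  rw [hset, prob_compl_eq_one_sub (hBmeas (Fin.last n))]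
  have : ENNReal.ofReal (1 - α) = 1 - ENNReal.ofReal α := by
    rw [ENNReal.ofReal_sub _ hα0, ENNReal.ofReal_one]
  rw [this]
  exact tsub_le_tsub_left hBlast 1
end
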